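/- arXiv:2507.20500 — 5 statements merged into one kernel-verified Lean document; each statement's English description precedes it below -/
import Mathlib

section
/- If F is a spanning linear forest of a graph G with the minimum possible number of paths, and u, v are endpoints of two distinct paths of F (or v is an isolated vertex of F and u an endpoint of another component), then u and v are not adjacent in G. -/
open SimpleGraph

def IsLinearForest {V : Type*} (F : SimpleGraph V) : Prop :=
  F.IsAcyclic ∧ ∀ v, (F.neighborSet v).ncard ≤ 2

/-- If `F` is a spanning linear forest of `G` with the minimum possible number of paths
(components), and `u`, `v` are endpoints (degree ≤ 1) of two distinct components of `F`,
then `u` and `v` are not adjacent in `G`. -/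
theorem stmt_2 {V : Type*} [Fintype V] (G F : SimpleGraph V) (hFG : F ≤ G)
    (hF : IsLinearForest F)
    (hmin : ∀ F' : SimpleGraph V, F' ≤ G → IsLinearForest F' →
      Nat.card F.ConnectedComponent ≤ Nat.card F'.ConnectedComponent)
    (u v : V) (hu : (F.neighborSet u).ncard ≤ 1) (hv : (F.neighborSet v).ncard ≤ 1)
    (hcomp : F.connectedComponentMk u ≠ F.connectedComponentMk v) :
    ¬ G.Adj u v := by
  classical
  intro hadj
  have hne : u ≠ v := fun h => hcomp (by rw [h])
  set F' : SimpleGraph V := F ⊔ edge u v with hF'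
  -- F' ≤ G
  have hedge_le : edge u v ≤ G := by
    intro x y hxy
    rw [edge_adj] at hxy
    rcases hxy.1 with ⟨rfl, rfl⟩ | ⟨rfl, rfl⟩
    · exact hadj
    · exact hadj.symm
  have hF'G : F' ≤ G := sup_le hFG hedge_le
  have hFF' : F ≤ F' := le_sup_left
  -- u, v not reachable in F
  have hnr : ¬ F.Reachable u v := fun h => hcomp (ConnectedComponent.sound h)
  -- F' is acyclic
  have hacyc : F'.IsAcyclic := by
    intro a c hc
    by_cases he : s(u, v) ∈ c.edges
    · have hreach : (F' \ fromEdgeSet {s(u, v)}).Reachable u v :=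
        (adj_and_reachable_delete_edges_iff_exists_cycle.mpr ⟨a, c, hc, he⟩).2
      refine hnr (hreach.mono ?_)
      intro x y hxy
      have h1 : F'.Adj x y := hxy.1
      have h2 : ¬ (fromEdgeSet {s(u, v)} : SimpleGraph V).Adj x y := hxy.2
      rcases h1 with h1 | h1
      · exact h1
      · exfalso
        rw [edge_adj] at h1
        exact h2 (by rw [fromEdgeSet_adj]
                     exact ⟨by rcases h1.1 with ⟨rfl, rfl⟩ | ⟨rfl, rfl⟩ <;> simp [Sym2.eq_swap],
                       h1.2⟩)
    · -- cycle avoiding the new edge lives in F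
      have hsub : ∀ e ∈ c.edges, e ∈ F.edgeSet := by
        intro e hec
        have heF' : e ∈ F'.edgeSet := c.edges_subset_edgeSet hec
        rw [hF', edgeSet_sup] at heF'
        rcases heF' with h | h
        · exact h
        · rw [edge_edgeSet_of_ne hne] at h
          exact absurd (h ▸ hec) he
      exact hF.1 (c.transfer F hsub) (hc.transfer hsub)
  -- F' is a linear forest
  have hdeg : ∀ x, (F'.neighborSet x).ncard ≤ 2 := by
    intro x
    have hsubset : F'.neighborSet x ⊆ F.neighborSet x ∪ (edge u v).neighborSet x := by
      intro y hy
      rcases hy with h | h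
      · exact Or.inl h
      · exact Or.inr h
    have hcard := Set.ncard_le_ncard hsubset (Set.toFinite _)
    refine hcard.trans ?_
    have hUnion := Set.ncard_union_le (F.neighborSet x) ((edge u v).neighborSet x)
    refine hUnion.trans ?_
    by_cases hxu : x = u
    · subst hxu
      have : (edge x v).neighborSet x = {v} := by
        ext y; rw [Set.mem_singleton_iff, mem_neighborSet, edge_adj]; aesop
      rw [this, Set.ncard_singleton]
      omega
    by_cases hxv : x = v
    · subst hxv
      have : (edge u x).neighborSet x = {u} := by
        ext y; rw [Set.mem_singleton_iff, mem_neighborSet, edge_adj]; aesop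
      rw [this, Set.ncard_singleton]
      omega
    · have : (edge u v).neighborSet x = ∅ := by
        ext y; simp only [mem_neighborSet, edge_adj, Set.mem_empty_iff_false, iff_false]
        rintro ⟨⟨rfl, rfl⟩ | ⟨rfl, rfl⟩, _⟩ <;> simp_all
      rw [this, Set.ncard_empty]
      have := hF.2 x
      omega
  have hLF' : IsLinearForest F' := ⟨hacyc, hdeg⟩
  -- component map
  let f : F.ConnectedComponent → F'.ConnectedComponent :=
    ConnectedComponent.map (Hom.ofLE hFF')
  have hsurj : Function.Surjective f := by
    intro c
    refine c.ind (fun x => ?_)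
    exact ⟨F.connectedComponentMk x, rfl⟩
  have hle : Nat.card F.ConnectedComponent ≤ Nat.card F'.ConnectedComponent :=
    hmin F' hF'G hLF'
  have hbij : Function.Bijective f := hsurj.bijective_of_nat_card_le hle
  have hfeq : f (F.connectedComponentMk u) = f (F.connectedComponentMk v) := by
    apply ConnectedComponent.sound
    exact Adj.reachable (Or.inr (by rw [edge_adj]; exact ⟨Or.inl ⟨rfl, rfl⟩, hne⟩))
  exact hcomp (hbij.1 hfeq)
end

section
/- Let F be a spanning linear forest of a graph G, let v be an endpoint of F (a vertex of degree at most 1 in F), and let u be a neighbour of v in G with u having degree at least 1 in F. Then there exists an edge uw of F such that the graph F' obtained from F by deleting uw and adding uv is again a linear forest, and F' has the same number of connected components as F. -/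
open SimpleGraph

/-!
Let `uw` be the first edge of the `F`-path from `u` to `v` (any edge at `u` if there is no such
path) and let `D` be `F` with `uw` deleted. In `D` the vertex `u` is separated from `w`, since
every edge of a forest is a bridge, and from `v`, since the rest of the path avoids `u`. Hence
both `F = D + uw` and the rotated graph `D + uv` join two components of `D`: each is acyclic and
has exactly one component fewer than `D`. Degrees only grow at `u` and `v`, whose `D`-degrees
are at most one.
-/

namespace SimpleGraph
variable {V : Type*} {G : SimpleGraph V}

theorem reachable_sup_edge_iff {a b x y : V} :
    (G ⊔ edge a b).Reachable x y ↔
      G.Reachable x y ∨ G.Reachable x a ∧ G.Reachable b y ∨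
        G.Reachable x b ∧ G.Reachable a y := by
  constructor
  · rintro ⟨p⟩
    induction p with
    | nil => exact .inl .rfl
    | cons h _ ih =>
      rw [sup_adj, edge_adj] at h
      rcases h with h | ⟨⟨rfl, rfl⟩ | ⟨rfl, rfl⟩, -⟩
      · have := h.reachable
        grind [Reachable.trans]
      all_goals grind [Reachable.trans, Reachable.refl]
  · have hab : (G ⊔ edge a b).Reachable a b := by
      rcases eq_or_ne a b with rfl | hne
      · rfl
      · exact Adj.reachable (by simp [edge_adj, hne])
    have hle : G ≤ G ⊔ edge a b := le_sup_left
    rintro (h | ⟨h₁, h₂⟩ | ⟨h₁, h₂⟩)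
    · exact h.mono hle
    · exact (h₁.mono hle).trans (hab.trans (h₂.mono hle))
    · exact (h₁.mono hle).trans (hab.symm.trans (h₂.mono hle))

theorem card_connectedComponent_sup_edge_add_one [Finite V] {a b : V} (hab : ¬G.Reachable a b) :
    Nat.card (G ⊔ edge a b).ConnectedComponent + 1 = Nat.card G.ConnectedComponent := by
  -- every component of `G` except that of `b` survives as a component of `G ⊔ edge a b`
  let g (c : {c : G.ConnectedComponent // c ≠ G.connectedComponentMk b}) :
      (G ⊔ edge a b).ConnectedComponent :=
    c.1.map (Hom.ofLE le_sup_left)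
  have hg : Function.Bijective g := by
    constructor
    · rintro ⟨c, hc⟩ ⟨c', hc'⟩ h
      induction c using ConnectedComponent.ind
      induction c' using ConnectedComponent.ind
      simp only [g, ConnectedComponent.map_mk, Hom.coe_ofLE, id_eq, ne_eq, ConnectedComponent.eq,
        reachable_sup_edge_iff] at h hc hc'
      refine Subtype.ext (ConnectedComponent.sound ?_)
      rcases h with h | ⟨-, h⟩ | ⟨h, -⟩
      · exact h
      · exact absurd h.symm hc'
      · exact absurd h hc
    · refine ConnectedComponent.ind fun x => ?_
      by_cases hx : G.Reachable x b
      · refine ⟨⟨G.connectedComponentMk a, by simpa using hab⟩, ?_⟩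
        exact ConnectedComponent.sound (reachable_sup_edge_iff.2 (.inr (.inl ⟨.rfl, hx.symm⟩)))
      · exact ⟨⟨G.connectedComponentMk x, by simpa using hx⟩, rfl⟩
  rw [← Nat.card_eq_of_bijective g hg]
  cases nonempty_fintype G.ConnectedComponent
  classical
  rw [Nat.card_eq_fintype_card, Nat.card_eq_fintype_card, Fintype.card_subtype_compl,
    Fintype.card_subtype_eq]
  have := Fintype.card_pos_iff.2 ⟨G.connectedComponentMk b⟩
  omega

theorem ncard_neighborSet_edge_le_one (a b x : V) : ((edge a b).neighborSet x).ncard ≤ 1 := by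
  have hs : ((edge a b).neighborSet x).Subsingleton := by
    intro y hy z hz
    simp only [mem_neighborSet, edge_adj] at hy hz
    grind
  exact (Set.ncard_le_one hs.finite).2 hs

theorem neighborSet_deleteEdges_singleton (u w : V) :
    (G.deleteEdges {s(u, w)}).neighborSet u = G.neighborSet u \ {w} := by
  ext x
  simp only [mem_neighborSet, deleteEdges_adj, Set.mem_singleton_iff, Sym2.eq_iff, Set.mem_sdiff]
  grind [G.ne_of_adj]

theorem deleteEdges_singleton_sup_edge {u w : V} (h : G.Adj u w) :
    G.deleteEdges {s(u, w)} ⊔ edge u w = G := by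
  ext x y
  simp only [sup_adj, deleteEdges_adj, edge_adj, Set.mem_singleton_iff, Sym2.eq_iff]
  grind [G.adj_symm, G.ne_of_adj]

theorem IsAcyclic.exists_adj_not_reachable_deleteEdges (hG : G.IsAcyclic) {u v w₀ : V}
    (huv : u ≠ v) (hw₀ : G.Adj u w₀) :
    ∃ w, G.Adj u w ∧ ¬(G.deleteEdges {s(u, w)}).Reachable u v := by
  by_cases hr : G.Reachable u v
  · obtain ⟨p, hp⟩ := hr.exists_isPath
    cases p with
    | nil => exact absurd rfl huv
    | @cons _ w _ h q =>
      refine ⟨_, h, fun hD => isAcyclic_iff_forall_adj_isBridge.mp hG h ?_⟩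
      -- the path leaves `u` for good, so its tail survives deleting `uw`
      have hq : s(u, w) ∉ q.edges := fun he =>
        ((Walk.cons_isPath_iff h q).mp hp).2 (q.fst_mem_support_of_mem_edges he)
      exact hD.trans (q.toDeleteEdges _ fun e he => by rintro rfl; exact hq he).reachable.symm
  · exact ⟨w₀, hw₀, fun h => hr (h.mono (deleteEdges_le _))⟩

theorem fromEdgeSet_edgeSet_sdiff_union_singleton (s : Set (Sym2 V)) (a b : V) :
    fromEdgeSet ((G.edgeSet \ s) ∪ {s(a, b)}) = G.deleteEdges s ⊔ edge a b := by
  rw [fromEdgeSet_union, ← deleteEdges_fromEdgeSet, fromEdgeSet_edgeSet]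
  rfl

end SimpleGraph

theorem IsLinearForest.anti {V : Type*} [Finite V] {G H : SimpleGraph V} (hHG : H ≤ G)
    (hG : IsLinearForest G) : IsLinearForest H :=
  ⟨hG.1.anti hHG, fun x => (Set.ncard_le_ncard (neighborSet_mono hHG x)).trans (hG.2 x)⟩

theorem IsLinearForest.sup_edge {V : Type*} {H : SimpleGraph V} (hH : IsLinearForest H) {a b : V}
    (hab : ¬H.Reachable a b) (ha : (H.neighborSet a).ncard ≤ 1)
    (hb : (H.neighborSet b).ncard ≤ 1) : IsLinearForest (H ⊔ edge a b) := by
  refine ⟨hH.1.sup_edge_of_not_reachable hab, fun x => ?_⟩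
  rw [neighborSet_sup]
  by_cases hx : x = a ∨ x = b
  · calc _ ≤ (H.neighborSet x).ncard + ((edge a b).neighborSet x).ncard := Set.ncard_union_le _ _
      _ ≤ 1 + 1 := by
        gcongr
        · rcases hx with rfl | rfl <;> assumption
        · exact ncard_neighborSet_edge_le_one a b x
  · have : (edge a b).neighborSet x = ∅ := by
      ext y
      simp only [mem_neighborSet, edge_adj]
      grind
    simpa [this] using hH.2 x

theorem stmt_3_general {V : Type*} [Fintype V] (G F : SimpleGraph V)
    (hF : IsLinearForest F) (v u : V)
    (hv : (F.neighborSet v).ncard ≤ 1) (huv : G.Adj u v)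
    (hu : 1 ≤ (F.neighborSet u).ncard) :
    ∃ w, F.Adj u w ∧
      IsLinearForest (SimpleGraph.fromEdgeSet ((F.edgeSet \ {s(u, w)}) ∪ {s(u, v)})) ∧
      Nat.card (SimpleGraph.fromEdgeSet
          ((F.edgeSet \ {s(u, w)}) ∪ {s(u, v)})).ConnectedComponent
        = Nat.card F.ConnectedComponent := by
  obtain ⟨w₀, hw₀⟩ : (F.neighborSet u).Nonempty := Set.nonempty_of_ncard_ne_zero (by omega)
  obtain ⟨w, huw, hsep⟩ := hF.1.exists_adj_not_reachable_deleteEdges huv.ne hw₀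
  set D := F.deleteEdges {s(u, w)}
  have hDu : (D.neighborSet u).ncard ≤ 1 := by
    have := hF.2 u
    rw [neighborSet_deleteEdges_singleton,
      Set.ncard_sdiff_singleton_of_mem ((mem_neighborSet ..).2 huw)]
    omega
  have hDv : (D.neighborSet v).ncard ≤ 1 :=
    (Set.ncard_le_ncard (neighborSet_mono (deleteEdges_le _) v)).trans hv
  have hbridge : ¬D.Reachable u w := isAcyclic_iff_forall_adj_isBridge.mp hF.1 huw
  have hcardRot := card_connectedComponent_sup_edge_add_one hsep
  have hcardF := card_connectedComponent_sup_edge_add_one hbridge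
  rw [deleteEdges_singleton_sup_edge huw] at hcardF
  have hrot : fromEdgeSet ((F.edgeSet \ {s(u, w)}) ∪ {s(u, v)}) = D ⊔ edge u v :=
    fromEdgeSet_edgeSet_sdiff_union_singleton _ u v
  refine ⟨w, huw, ?_⟩
  rw [hrot]
  exact ⟨(hF.anti (deleteEdges_le _)).sup_edge hsep hDu hDv, by omega⟩

/-- Existence of a rotation: if `F` is a spanning linear forest of `G`, `v` an endpoint of
`F`, and `u` a `G`-neighbour of `v` with `F`-degree at least 1, then there is an edge `uw`
of `F` such that removing `uw` and adding `uv` yields a linear forest with the same number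
of components. -/
theorem stmt_3 {V : Type*} [Fintype V] (G F : SimpleGraph V) (hFG : F ≤ G)
    (hF : IsLinearForest F) (v u : V)
    (hv : (F.neighborSet v).ncard ≤ 1) (huv : G.Adj u v)
    (hu : 1 ≤ (F.neighborSet u).ncard) :
    ∃ w, F.Adj u w ∧
      IsLinearForest (SimpleGraph.fromEdgeSet ((F.edgeSet \ {s(u, w)}) ∪ {s(u, v)})) ∧
      Nat.card (SimpleGraph.fromEdgeSet
          ((F.edgeSet \ {s(u, w)}) ∪ {s(u, v)})).ConnectedComponent
        = Nat.card F.ConnectedComponent :=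
  stmt_3_general G F hF v u hv huv hu
end

section
/- If F' is obtained from a linear forest F by a rotation removing edge uw and adding edge uv, where v is an endpoint of F, then the multiset of endpoints of F' equals the multiset of endpoints of F with v removed and w added. (Here an isolated vertex counts as an endpoint with multiplicity two.) -/
/-!
Rotating `uw` to `uv` changes only the degrees of `u`, `v` and `w`: `v` gains the edge `uv`,
`w` loses the edge `uw`, and `u` trades one edge for the other. A vertex of degree `d`
contributes `2 - d` copies of itself to the endpoint multiset, so `v` loses one copy and `w`
gains one; the truncated subtraction does no harm because `deg v ≤ 1` and `deg w ≤ 2`.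
When `w = v` the rotation leaves the forest unchanged and `v` is one of its endpoints.
-/

open SimpleGraph

/-- The multiset of endpoints of a linear forest: each vertex `v` appears with
multiplicity `2 - deg(v)`, so isolated vertices are counted twice. -/
noncomputable def endMultiset {V : Type*} [Fintype V] (F : SimpleGraph V) : Multiset V :=
  (Finset.univ.val : Multiset V).bind fun v =>
    Multiset.replicate (2 - (F.neighborSet v).ncard) v

theorem count_endMultiset {V : Type*} [Fintype V] [DecidableEq V] (F : SimpleGraph V) (x : V) :
    (endMultiset F).count x = 2 - (F.neighborSet x).ncard := by
  simp [endMultiset, Multiset.count_bind, Multiset.count_replicate]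

namespace SimpleGraph

variable {V : Type*} (F : SimpleGraph V) {u v w : V}

def rotate (u w v : V) : SimpleGraph V :=
  fromEdgeSet ((F.edgeSet \ {s(u, w)}) ∪ {s(u, v)})

variable {F}

theorem rotate_self (huw : F.Adj u w) : F.rotate u w w = F := by
  rw [rotate, Set.sdiff_union_self, Set.union_eq_self_of_subset_right (by simpa using huw),
    fromEdgeSet_edgeSet]

theorem neighborSet_rotate_target (huv : u ≠ v) (hwv : w ≠ v) :
    (F.rotate u w v).neighborSet v = insert u (F.neighborSet v) := by
  ext y
  simp [rotate]
  aesop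

theorem neighborSet_rotate_source (huw : u ≠ w) (hwv : w ≠ v) :
    (F.rotate u w v).neighborSet w = F.neighborSet w \ {u} := by
  ext y
  simp [rotate]
  aesop

theorem neighborSet_rotate_pivot (huv : u ≠ v) :
    (F.rotate u w v).neighborSet u = insert v (F.neighborSet u \ {w}) := by
  ext y
  simp [rotate]
  aesop

theorem neighborSet_rotate_of_ne {x : V} (hxu : x ≠ u) (hxv : x ≠ v) (hxw : x ≠ w) :
    (F.rotate u w v).neighborSet x = F.neighborSet x := by
  ext y
  simp [rotate]
  aesop

theorem ncard_neighborSet_rotate_add [Finite V] [DecidableEq V] (huw : F.Adj u w) (huv : u ≠ v)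
    (hcase : w = v ∨ ¬ F.Adj u v) (x : V) :
    ((F.rotate u w v).neighborSet x).ncard + (if x = w then 1 else 0) =
      (F.neighborSet x).ncard + if x = v then 1 else 0 := by
  obtain rfl | hnadj := hcase
  · rw [rotate_self huw]
  have hwv : w ≠ v := by rintro rfl; exact hnadj huw
  by_cases hxv : x = v
  · subst hxv
    rw [neighborSet_rotate_target huv hwv, Set.ncard_insert_of_notMem fun h => hnadj h.symm]
    simp [hwv.symm]
  by_cases hxw : x = w
  · subst hxw
    rw [neighborSet_rotate_source huw.ne hwv, if_pos rfl, if_neg hxv]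
    exact Set.ncard_sdiff_singleton_add_one huw.symm
  by_cases hxu : x = u
  · subst hxu
    rw [neighborSet_rotate_pivot huv, Set.ncard_insert_of_notMem (by simp [hnadj]), if_neg hxv,
      if_neg hxw]
    exact Set.ncard_sdiff_singleton_add_one huw
  · simp [neighborSet_rotate_of_ne hxu hxv hxw, hxv, hxw]

end SimpleGraph

theorem stmt_4_general {V : Type*} [Fintype V] [DecidableEq V] (F : SimpleGraph V) (u v w : V)
    (hF : IsLinearForest F) (hv : (F.neighborSet v).ncard ≤ 1)
    (huw : F.Adj u w) (huv : u ≠ v) (hcase : w = v ∨ ¬ F.Adj u v)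
    (F' : SimpleGraph V)
    (hF' : F' = SimpleGraph.fromEdgeSet ((F.edgeSet \ {s(u, w)}) ∪ {s(u, v)})) :
    endMultiset F' = w ::ₘ (endMultiset F).erase v := by
  obtain rfl : F' = F.rotate u w v := hF'
  ext x
  have hdeg := ncard_neighborSet_rotate_add huw huv hcase x
  have hdeg_le := hF.2 x
  rw [count_endMultiset, Multiset.count_cons]
  obtain rfl | hxv := eq_or_ne x v
  · rw [Multiset.count_erase_self, count_endMultiset, if_pos rfl] at *
    split_ifs at hdeg ⊢ <;> omega
  · rw [Multiset.count_erase_of_ne hxv, count_endMultiset, if_neg hxv] at *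
    split_ifs at hdeg ⊢ <;> omega

/-- After a rotation removing `uw` and adding `uv` (where `v` is an endpoint of `F`),
the multiset of endpoints of the new linear forest is obtained from that of `F` by
removing `v` and adding `w`. -/
theorem stmt_4 {V : Type*} [Fintype V] [DecidableEq V] (F : SimpleGraph V) (u v w : V)
    (hF : IsLinearForest F) (hv : (F.neighborSet v).ncard ≤ 1)
    (huw : F.Adj u w) (huv : u ≠ v) (hcase : w = v ∨ ¬ F.Adj u v)
    (F' : SimpleGraph V)
    (hF' : F' = SimpleGraph.fromEdgeSet ((F.edgeSet \ {s(u, w)}) ∪ {s(u, v)}))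
    (hlin : IsLinearForest F') :
    endMultiset F' = w ::ₘ (endMultiset F).erase v :=
  stmt_4_general F u v w hF hv huw huv hcase F' hF'
end

section
/- Let F be a spanning linear forest of a graph G, v an endpoint of F, and u a vertex adjacent to v in G with exactly two F-neighbours w and w'. Then for at least one of w, w' (call it x), removing the edge ux from F and adding uv yields a linear forest. -/
open SimpleGraph

lemma my_add_edge_acyclic {V : Type*} {H : SimpleGraph V} {a b : V} (hH : H.IsAcyclic)
    (hr : ¬ H.Reachable a b) :
    (fromEdgeSet (H.edgeSet ∪ {s(a, b)})).IsAcyclic := by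
  intro c p hp
  by_cases he : s(a, b) ∈ p.edges
  · have hkey : (fromEdgeSet (H.edgeSet ∪ {s(a, b)})).Adj a b ∧
        ((fromEdgeSet (H.edgeSet ∪ {s(a, b)})) \ fromEdgeSet {s(a, b)}).Reachable a b :=
      adj_and_reachable_delete_edges_iff_exists_cycle.mpr ⟨c, p, hp, he⟩
    refine hr (hkey.2.mono ?_)
    intro x y hxy
    obtain ⟨h1, h2⟩ := hxy
    rw [fromEdgeSet_adj] at h1 h2
    push_neg at h2
    rcases h1.1 with h | h
    · exact h
    · exact absurd (h2 (by simpa using h)) h1.2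
  · have hsub : ∀ e ∈ p.edges, e ∈ H.edgeSet := by
      intro e hep
      have h1 := p.edges_subset_edgeSet hep
      rw [edgeSet_fromEdgeSet] at h1
      rcases h1.1 with h | h
      · exact h
      · exact absurd (h ▸ hep) he
    exact hH (p.transfer H hsub) (hp.transfer hsub)

/-- If `v` is an endpoint of a spanning linear forest `F` of `G` and `u` is a `G`-neighbour
of `v` with exactly two `F`-neighbours `w` and `w'`, then for at least one `x ∈ {w, w'}`,
removing `ux` from `F` and adding `uv` yields a linear forest. -/
theorem stmt_13 {V : Type*} [Fintype V] (G F : SimpleGraph V) (hFG : F ≤ G)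
    (hF : IsLinearForest F) (u v w w' : V)
    (hv : (F.neighborSet v).ncard ≤ 1) (huv : G.Adj u v)
    (hnbhd : F.neighborSet u = {w, w'}) (hne : w ≠ w') :
    ∃ x ∈ ({w, w'} : Set V),
      IsLinearForest (SimpleGraph.fromEdgeSet ((F.edgeSet \ {s(u, x)}) ∪ {s(u, v)})) := by
  classical
  obtain ⟨hac, hdeg⟩ := hF
  have hvu : v ≠ u := huv.ne'
  by_cases hvw : v ∈ ({w, w'} : Set V)
  · refine ⟨v, hvw, ?_⟩
    have hadj : F.Adj u v := by
      have : v ∈ F.neighborSet u := hnbhd ▸ hvw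
      exact this
    have heq : (F.edgeSet \ {s(u, v)}) ∪ {s(u, v)} = F.edgeSet := by
      rw [Set.diff_union_self, Set.union_eq_self_of_subset_right]
      simpa using hadj
    rw [heq, fromEdgeSet_edgeSet]
    exact ⟨hac, hdeg⟩
  · obtain ⟨x, hx, hnr⟩ : ∃ x ∈ ({w, w'} : Set V),
        ¬ (F.deleteEdges {s(u, x)}).Reachable u v := by
      by_cases hr : F.Reachable u v
      · obtain ⟨p0⟩ := hr
        set q : F.Path u v := p0.toPath with hqdef
        obtain ⟨y, hadj, q', hq'⟩ := q.val.exists_eq_cons_of_ne hvu.symm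
        refine ⟨y, by rw [show ({w, w'} : Set V) = F.neighborSet u from hnbhd.symm]; exact hadj, ?_⟩
        intro hrch
        obtain ⟨r0⟩ := hrch
        set r : (F.deleteEdges {s(u, y)}).Path u v := r0.toPath with hrdef
        have hsub : ∀ e ∈ r.val.edges, e ∈ F.edgeSet := by
          intro e hee
          have h1 := r.val.edges_subset_edgeSet hee
          rw [edgeSet_deleteEdges] at h1
          exact h1.1
        have huniq := isAcyclic_iff_path_unique.mp hac
          ⟨r.val.transfer F hsub, r.prop.transfer hsub⟩ q
        have hmem : s(u, y) ∈ q.val.edges := by rw [hq']; simp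
        rw [← huniq] at hmem
        simp only [Walk.edges_transfer] at hmem
        have h2 := r.val.edges_subset_edgeSet hmem
        rw [edgeSet_deleteEdges] at h2
        exact h2.2 rfl
      · exact ⟨w, by simp, fun h => hr (h.mono (by
          intro a b hab
          exact hab.1))⟩
    have hadjx : F.Adj u x := by
      have : x ∈ F.neighborSet u := hnbhd ▸ hx
      exact this
    have hxu : x ≠ u := hadjx.ne'
    have hxv : x ≠ v := fun h => hvw (h ▸ hx)
    refine ⟨x, hx, ?_, ?_⟩
    · have heq : (F.edgeSet \ {s(u, x)}) ∪ {s(u, v)} =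
          (F.deleteEdges {s(u, x)}).edgeSet ∪ {s(u, v)} := by
        rw [edgeSet_deleteEdges]
      rw [heq]
      have hacH : (F.deleteEdges {s(u, x)}).IsAcyclic := by
        intro c p hp
        have hsub : ∀ e ∈ p.edges, e ∈ F.edgeSet := by
          intro e hee
          have h1 := p.edges_subset_edgeSet hee
          rw [edgeSet_deleteEdges] at h1
          exact h1.1
        exact hac (p.transfer F hsub) (hp.transfer hsub)
      exact my_add_edge_acyclic hacH hnr
    · intro a
      have hadj' : ∀ b, (fromEdgeSet ((F.edgeSet \ {s(u, x)}) ∪ {s(u, v)})).Adj a b →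
          (F.Adj a b ∧ s(a, b) ≠ s(u, x)) ∨ s(a, b) = s(u, v) := by
        intro b hb
        rw [fromEdgeSet_adj] at hb
        rcases hb.1 with ⟨h1, h2⟩ | h1
        · exact Or.inl ⟨h1, h2⟩
        · exact Or.inr h1
      by_cases hau : a = u
      · subst hau
        have hsub : (fromEdgeSet ((F.edgeSet \ {s(a, x)}) ∪ {s(a, v)})).neighborSet a ⊆
            insert v (({w, w'} : Set V) \ {x}) := by
          intro b hb
          rcases hadj' b hb with ⟨h1, h2⟩ | h1
          · refine Set.mem_insert_of_mem _ ⟨hnbhd ▸ h1, ?_⟩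
            intro hbx
            exact h2 (by rw [Set.mem_singleton_iff.mp hbx])
          · rcases Sym2.eq_iff.mp h1 with ⟨_, rfl⟩ | ⟨h3, _⟩
            · exact Set.mem_insert _ _
            · exact absurd h3.symm hvu
        calc ((fromEdgeSet ((F.edgeSet \ {s(a, x)}) ∪ {s(a, v)})).neighborSet a).ncard
            ≤ (insert v (({w, w'} : Set V) \ {x})).ncard :=
              Set.ncard_le_ncard hsub (Set.toFinite _)
          _ ≤ (({w, w'} : Set V) \ {x}).ncard + 1 := Set.ncard_insert_le _ _
          _ ≤ 2 := by
              have : (({w, w'} : Set V) \ {x}).ncard ≤ 1 := by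
                rcases hx with rfl | rfl
                · have : (({x, w'} : Set V) \ {x}) ⊆ {w'} := by
                    rintro b ⟨hb1, hb2⟩
                    rcases hb1 with rfl | hb1
                    · exact absurd rfl hb2
                    · exact hb1
                  simpa using Set.ncard_le_ncard this (Set.toFinite _)
                · have : (({w, x} : Set V) \ {x}) ⊆ {w} := by
                    rintro b ⟨hb1, hb2⟩
                    rcases hb1 with rfl | hb1
                    · exact rfl
                    · exact absurd hb1 hb2
                  simpa using Set.ncard_le_ncard this (Set.toFinite _)
              omega
      · by_cases hav : a = v
        · subst hav
          have hsub : (fromEdgeSet ((F.edgeSet \ {s(u, x)}) ∪ {s(u, a)})).neighborSet a ⊆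
              insert u (F.neighborSet a) := by
            intro b hb
            rcases hadj' b hb with ⟨h1, _⟩ | h1
            · exact Set.mem_insert_of_mem _ h1
            · rcases Sym2.eq_iff.mp h1 with ⟨h3, _⟩ | ⟨_, rfl⟩
              · exact absurd h3 hvu
              · exact Set.mem_insert _ _
          calc ((fromEdgeSet ((F.edgeSet \ {s(u, x)}) ∪ {s(u, a)})).neighborSet a).ncard
              ≤ (insert u (F.neighborSet a)).ncard := Set.ncard_le_ncard hsub (Set.toFinite _)
            _ ≤ (F.neighborSet a).ncard + 1 := Set.ncard_insert_le _ _
            _ ≤ 2 := by omega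
        · have hsub : (fromEdgeSet ((F.edgeSet \ {s(u, x)}) ∪ {s(u, v)})).neighborSet a ⊆
              F.neighborSet a := by
            intro b hb
            rcases hadj' b hb with ⟨h1, _⟩ | h1
            · exact h1
            · rcases Sym2.eq_iff.mp h1 with ⟨h3, _⟩ | ⟨h3, _⟩
              · exact absurd h3 hau
              · exact absurd h3 hav
          exact le_trans (Set.ncard_le_ncard hsub (Set.toFinite _)) (hdeg a)
end

section
/- Let F be a spanning linear forest of a graph G with the minimum possible number of components among spanning linear forests of G. Then no endpoint u of F is adjacent in G to two distinct endpoints v ≠ v' of F; that is, no minimum spanning linear forest has an endpoint adjacent to two other distinct endpoints. -/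
open SimpleGraph

section Aux

variable {V : Type*} [Fintype V] {F : SimpleGraph V}

lemma aux_subsingleton_diff {a' a : V} (hdeg : (F.neighborSet a').ncard ≤ 2)
    (hmem : a ∈ F.neighborSet a') : ((F.neighborSet a') \ {a}).Subsingleton := by
  have h1 : (F.neighborSet a' \ {a}).ncard + 1 = (F.neighborSet a').ncard :=
    Set.ncard_diff_singleton_add_one hmem (Set.toFinite _)
  have hle : (F.neighborSet a' \ {a}).ncard ≤ 1 := by omega
  intro x hx y hy
  exact (Set.ncard_le_one_iff (Set.toFinite _)).mp hle hx hy

/-- Two paths starting at a vertex with at most one "available" neighbor are comparable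
(one support is contained in the other), in a graph of max degree 2. -/
lemma aux_prefix (hdeg : ∀ x, (F.neighborSet x).ncard ≤ 2) :
    ∀ {a b c : V} (q : F.Walk a b) (p : F.Walk a c), q.IsPath → p.IsPath →
      ∀ t : Set V, ((F.neighborSet a) \ t).Subsingleton →
        (∀ x ∈ t, x ∉ q.support) → (∀ x ∈ t, x ∉ p.support) →
        (∀ x ∈ q.support, x ∈ p.support) ∨ (∀ x ∈ p.support, x ∈ q.support) := by
  intro a b c q
  induction q with
  | nil =>
    intro p _ _ _ _ _ _
    left
    intro x hx
    simp only [SimpleGraph.Walk.support_nil, List.mem_singleton] at hx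
    subst hx
    exact p.start_mem_support
  | @cons a a' b h q ih =>
    intro p hq hp t ht hqt hpt
    cases p with
    | nil =>
      right
      intro x hx
      simp only [SimpleGraph.Walk.support_nil, List.mem_singleton] at hx
      subst hx
      exact (SimpleGraph.Walk.cons h q).start_mem_support
    | @cons _ a₂ _ h' p' =>
      have hqq : q.IsPath ∧ a ∉ q.support := (SimpleGraph.Walk.cons_isPath_iff _ _).mp hq
      have hpp : p'.IsPath ∧ a ∉ p'.support := (SimpleGraph.Walk.cons_isPath_iff _ _).mp hp
      have ha' : a' ∉ t := by
        intro hmem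
        exact hqt a' hmem (by simp [SimpleGraph.Walk.support_cons, q.start_mem_support])
      have ha₂ : a₂ ∉ t := by
        intro hmem
        exact hpt a₂ hmem (by simp [SimpleGraph.Walk.support_cons, p'.start_mem_support])
      have heq : a₂ = a' := ht ⟨h', ha₂⟩ ⟨h, ha'⟩
      subst heq
      have key := ih p' hqq.1 hpp.1 {a}
        (aux_subsingleton_diff (hdeg _) h.symm)
        (by intro x hx; simp only [Set.mem_singleton_iff] at hx; subst hx; exact hqq.2)
        (by intro x hx; simp only [Set.mem_singleton_iff] at hx; subst hx; exact hpp.2)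
      rcases key with hsub | hsub
      · left
        intro x hx
        simp only [SimpleGraph.Walk.support_cons, List.mem_cons] at hx ⊢
        rcases hx with rfl | hx
        · exact Or.inl rfl
        · exact Or.inr (hsub x hx)
      · right
        intro x hx
        simp only [SimpleGraph.Walk.support_cons, List.mem_cons] at hx ⊢
        rcases hx with rfl | hx
        · exact Or.inl rfl
        · exact Or.inr (hsub x hx)

/-- An interior vertex of a path has at least two neighbors. -/
lemma aux_interior {x y z : V} (p : F.Walk x y) (hp : p.IsPath)
    (hz : z ∈ p.support) (hzx : z ≠ x) (hzy : z ≠ y) :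
    2 ≤ (F.neighborSet z).ncard := by
  classical
  set p₁ := p.takeUntil z hz with hp₁
  set p₂ := p.dropUntil z hz with hp₂
  have hsupp : p.support = p₁.support ++ p₂.support.tail := by
    rw [← SimpleGraph.Walk.take_spec p hz, SimpleGraph.Walk.support_append]
  have hdisj : p₁.support.Disjoint p₂.support.tail := by
    have := hp.support_nodup
    rw [hsupp] at this
    exact List.disjoint_of_nodup_append this
  -- neighbor from p₁ (reversed)
  obtain ⟨w₁, hw₁adj, hw₁mem⟩ : ∃ w₁, F.Adj z w₁ ∧ w₁ ∈ p₁.support := by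
    cases hr : p₁.reverse with
    | nil =>
      exfalso
      have : p₁.reverse.length = 0 := by rw [hr]; rfl
      rw [SimpleGraph.Walk.length_reverse] at this
      exact hzx (SimpleGraph.Walk.eq_of_length_eq_zero this).symm
    | @cons _ w₁ _ h r =>
      refine ⟨w₁, h, ?_⟩
      have hmem : w₁ ∈ p₁.reverse.support := by
        rw [hr, SimpleGraph.Walk.support_cons]
        exact List.mem_cons_of_mem _ r.start_mem_support
      rw [SimpleGraph.Walk.support_reverse, List.mem_reverse] at hmem
      exact hmem
  -- neighbor from p₂
  obtain ⟨w₂, hw₂adj, hw₂mem⟩ : ∃ w₂, F.Adj z w₂ ∧ w₂ ∈ p₂.support.tail := by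
    cases hr : p₂ with
    | nil => exact absurd rfl hzy
    | cons h r =>
      refine ⟨_, h, ?_⟩
      rw [SimpleGraph.Walk.support_cons]
      exact r.start_mem_support
  have hne : w₁ ≠ w₂ := fun hcontra => hdisj hw₁mem (hcontra ▸ hw₂mem)
  have hsub : ({w₁, w₂} : Set V) ⊆ F.neighborSet z := by
    rintro x (rfl | rfl)
    exacts [hw₁adj, hw₂adj]
  calc 2 = ({w₁, w₂} : Set V).ncard := (Set.ncard_pair hne).symm
    _ ≤ (F.neighborSet z).ncard := Set.ncard_le_ncard hsub (Set.toFinite _)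

/-- Three distinct vertices of degree at most one cannot all be in the same component of a
linear forest. -/
lemma aux_threeLeaves (hdeg : ∀ x, (F.neighborSet x).ncard ≤ 2)
    {u v v' : V} (huv : u ≠ v) (huv' : u ≠ v') (hvv' : v ≠ v')
    (hu : (F.neighborSet u).ncard ≤ 1)
    (hv' : (F.neighborSet v').ncard ≤ 1) (hvle : (F.neighborSet v).ncard ≤ 1)
    (h1 : F.Reachable v u) (h2 : F.Reachable v v') : False := by
  classical
  obtain ⟨q⟩ := h1
  obtain ⟨p⟩ := h2
  have hsub : ((F.neighborSet v) \ (∅ : Set V)).Subsingleton := by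
    rw [Set.diff_empty]
    intro x hx y hy
    exact (Set.ncard_le_one_iff (Set.toFinite _)).mp hvle hx hy
  have key := aux_prefix hdeg q.toPath.1 p.toPath.1 q.toPath.2 p.toPath.2 ∅ hsub
    (by simp) (by simp)
  rcases key with hs | hs
  · -- u ∈ p.support, interior
    have hu2 : 2 ≤ (F.neighborSet u).ncard :=
      aux_interior _ p.toPath.2 (hs u (q.toPath.1.end_mem_support)) huv huv'
    omega
  · have hv2 : 2 ≤ (F.neighborSet v').ncard :=
      aux_interior _ q.toPath.2 (hs v' (p.toPath.1.end_mem_support)) (hvv'.symm) (Ne.symm huv')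
    omega

/-- Joining two endpoints in different components gives a linear forest with fewer components. -/
lemma aux_join {G : SimpleGraph V} (hFG : F ≤ G) (hF : IsLinearForest F)
    {a b : V} (hab : G.Adj a b)
    (ha : (F.neighborSet a).ncard ≤ 1) (hb : (F.neighborSet b).ncard ≤ 1)
    (hreach : ¬ F.Reachable a b) :
    ∃ F' : SimpleGraph V, F' ≤ G ∧ IsLinearForest F' ∧
      Nat.card F'.ConnectedComponent < Nat.card F.ConnectedComponent := by
  classical
  have hne : a ≠ b := fun h => hreach (h ▸ Reachable.refl a)
  set F' := F ⊔ edge a b with hF'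
  have hadj : F'.Adj a b := Or.inr ((edge_adj a b a b).mpr ⟨Or.inl ⟨rfl, rfl⟩, hne⟩)
  refine ⟨F', sup_le hFG ?_, ⟨?_, ?_⟩, ?_⟩
  · -- edge a b ≤ G
    intro x y hxy
    rw [edge_adj] at hxy
    rcases hxy.1 with ⟨rfl, rfl⟩ | ⟨rfl, rfl⟩
    exacts [hab, hab.symm]
  · -- acyclic
    intro x c hc
    by_cases he : s(a, b) ∈ c.edges
    · have := (adj_and_reachable_delete_edges_iff_exists_cycle (G := F')).mpr ⟨x, c, hc, he⟩
      apply hreach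
      refine this.2.mono ?_
      intro y z hyz
      rw [deleteEdges, sdiff_adj, fromEdgeSet_adj] at hyz
      rcases hyz.1 with hF_adj | hedge
      · exact hF_adj
      · exfalso
        rw [edge_adj] at hedge
        apply hyz.2
        refine ⟨?_, hedge.2⟩
        rcases hedge.1 with ⟨rfl, rfl⟩ | ⟨rfl, rfl⟩
        · rfl
        · exact Sym2.eq_swap
    · have hsub : ∀ e ∈ c.edges, e ∈ F.edgeSet := by
        intro e hemem
        have : e ∈ F'.edgeSet := c.edges_subset_edgeSet hemem
        rw [hF', edgeSet_sup, edge_edgeSet_of_ne hne] at this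
        rcases this with h | h
        · exact h
        · exact absurd (h ▸ hemem) he
      exact hF.1 (c.transfer F hsub) (hc.transfer hsub)
  · -- degrees
    intro x
    have hns : F'.neighborSet x = F.neighborSet x ∪ (edge a b).neighborSet x := by
      ext y; simp [hF', mem_neighborSet, sup_adj]
    rw [hns]
    refine le_trans (Set.ncard_union_le _ _) ?_
    by_cases hxa : x = a
    · subst hxa
      have hset : (edge x b).neighborSet x = {b} := by
        ext y
        constructor
        · intro hy
          rw [mem_neighborSet, edge_adj] at hy
          rcases hy.1 with ⟨_, rfl⟩ | ⟨h1, rfl⟩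
          · rfl
          · exact absurd h1 hne
        · rintro rfl
          rw [mem_neighborSet, edge_adj]
          exact ⟨Or.inl ⟨rfl, rfl⟩, hne⟩
      rw [hset, Set.ncard_singleton]
      have := ha
      omega
    · by_cases hxb : x = b
      · subst hxb
        have hset : (edge a x).neighborSet x = {a} := by
          ext y
          constructor
          · intro hy
            rw [mem_neighborSet, edge_adj] at hy
            rcases hy.1 with ⟨h1, rfl⟩ | ⟨_, rfl⟩
            · exact absurd h1.symm hne
            · rfl
          · rintro rfl
            rw [mem_neighborSet, edge_adj]
            exact ⟨Or.inr ⟨rfl, rfl⟩, fun h => hne h.symm⟩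
        rw [hset, Set.ncard_singleton]
        have := hb
        omega
      · have hset : (edge a b).neighborSet x = ∅ := by
          ext y
          constructor
          · intro hy
            rw [mem_neighborSet, edge_adj] at hy
            rcases hy.1 with ⟨rfl, _⟩ | ⟨rfl, _⟩
            · exact absurd rfl hxa
            · exact absurd rfl hxb
          · intro h
            exact absurd h (Set.notMem_empty y)
        rw [hset, Set.ncard_empty]
        have := hF.2 x
        omega
  · -- fewer components
    have hle : F ≤ F' := le_sup_left
    let f : F.ConnectedComponent → F'.ConnectedComponent :=
      ConnectedComponent.map (SimpleGraph.Hom.ofLE hle)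
    have hsurj : Function.Surjective f := by
      intro C
      refine C.ind fun x => ⟨F.connectedComponentMk x, rfl⟩
    have hninj : ¬ Function.Injective f := by
      intro hinj
      have h1 : f (F.connectedComponentMk a) = f (F.connectedComponentMk b) := by
        simp only [f, ConnectedComponent.map_mk]
        exact ConnectedComponent.sound hadj.reachable
      have := hinj h1
      rw [ConnectedComponent.eq] at this
      exact hreach this
    haveI : Fintype F.ConnectedComponent := Fintype.ofFinite _
    haveI : Fintype F'.ConnectedComponent := Fintype.ofFinite _
    rw [Nat.card_eq_fintype_card, Nat.card_eq_fintype_card]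
    exact Fintype.card_lt_of_surjective_not_injective f hsurj hninj

end Aux

/-- No minimum spanning linear forest has an endpoint adjacent (in `G`) to two other
distinct endpoints. -/
theorem stmt_14 {V : Type*} [Fintype V] (G F : SimpleGraph V) (hFG : F ≤ G)
    (hF : IsLinearForest F)
    (hmin : ∀ F' : SimpleGraph V, F' ≤ G → IsLinearForest F' →
      Nat.card F.ConnectedComponent ≤ Nat.card F'.ConnectedComponent)
    (u v v' : V) (hv_ne : v ≠ v')
    (hu : (F.neighborSet u).ncard ≤ 1)
    (hv : (F.neighborSet v).ncard ≤ 1) (hv' : (F.neighborSet v').ncard ≤ 1)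
    (huv : G.Adj u v) (huv' : G.Adj u v') :
    False := by
  have hr1 : F.Reachable u v := by
    by_contra hreach
    obtain ⟨F', hle, hlf, hcard⟩ := aux_join hFG hF huv hu hv hreach
    exact absurd (hmin F' hle hlf) (by omega)
  have hr2 : F.Reachable u v' := by
    by_contra hreach
    obtain ⟨F', hle, hlf, hcard⟩ := aux_join hFG hF huv' hu hv' hreach
    exact absurd (hmin F' hle hlf) (by omega)
  exact aux_threeLeaves hF.2 (fun h => huv.ne h) (fun h => huv'.ne h) hv_ne hu hv' hv
    hr1.symm (hr1.symm.trans hr2)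
end
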